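/- Let (A, (·,·,·), α) be a ternary totally Hom-associative algebra over a field k of characteristic 0 whose two twisting maps are both equal to α. Define the triple product [x,y,z] = (x,y,z) − (y,x,z) − (z,x,y) + (z,y,x). Then L(A) = (A, [·,·,·], α) is a Hom-Lie triple system; and if A is multiplicative, then so is L(A). -/
import Mathlib


/-- The bracket `[x,y,z] = (x,y,z) − (y,x,z) − (z,x,y) + (z,y,x)` of a ternary
product. -/
def ternaryLieBracket {k A : Type*} [Field k] [AddCommGroup A] [Module k A]
    (t : A →ₗ[k] A →ₗ[k] A →ₗ[k] A) (x y z : A) : A :=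
  t x y z - t y x z - t z x y + t z y x

/-- If `(A, (·,·,·), α)` is a ternary totally
Hom-associative algebra with both twisting maps equal to `α`, then
`L(A) = (A, [·,·,·], α)` with
`[x,y,z] = (x,y,z) − (y,x,z) − (z,x,y) + (z,y,x)` is a Hom-Lie triple system;
and if `A` is multiplicative, then so is `L(A)`. -/
theorem ternaryHomAssoc_gives_homLie_triple_system
    {k A : Type*} [Field k] [CharZero k] [AddCommGroup A] [Module k A]
    (t : A →ₗ[k] A →ₗ[k] A →ₗ[k] A) (α : A →ₗ[k] A)
    (hassoc : ∀ u v w x y : A,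
      t (t u v w) (α x) (α y) = t (α u) (t v w x) (α y) ∧
      t (α u) (t v w x) (α y) = t (α u) (α v) (t w x y)) :
    -- left anti-symmetry
    (∀ u v w : A, ternaryLieBracket t u v w = - ternaryLieBracket t v u w) ∧
    -- the ternary Jacobi identity
    (∀ u v w : A,
      ternaryLieBracket t u v w + ternaryLieBracket t w u v
        + ternaryLieBracket t v w u = 0) ∧
    -- the ternary Hom-Nambu identity with both twisting maps equal to α
    (∀ u v w x y : A,
      ternaryLieBracket t (α x) (α y) (ternaryLieBracket t u v w)
        = ternaryLieBracket t (ternaryLieBracket t x y u) (α v) (α w)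
          + ternaryLieBracket t (α u) (ternaryLieBracket t x y v) (α w)
          + ternaryLieBracket t (α u) (α v) (ternaryLieBracket t x y w)) ∧
    -- if A is multiplicative, then so is L(A)
    ((∀ x y z : A, α (t x y z) = t (α x) (α y) (α z)) →
      ∀ x y z : A,
        α (ternaryLieBracket t x y z)
          = ternaryLieBracket t (α x) (α y) (α z)) := by
  have h2 : ∀ u v w x y : A,
      t (α u) (t v w x) (α y) = t (α u) (α v) (t w x y) :=
    fun u v w x y => (hassoc u v w x y).2
  have h1 : ∀ u v w x y : A,
      t (t u v w) (α x) (α y) = t (α u) (α v) (t w x y) :=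
    fun u v w x y => (hassoc u v w x y).1.trans (h2 u v w x y)
  refine ⟨fun u v w => ?_, fun u v w => ?_, fun u v w x y => ?_, fun hm x y z => ?_⟩
  · simp only [ternaryLieBracket]; abel
  · simp only [ternaryLieBracket]; abel
  · simp only [ternaryLieBracket, map_add, map_sub, LinearMap.add_apply,
      LinearMap.sub_apply, h1, h2]
    abel
  · simp only [ternaryLieBracket, map_add, map_sub, hm]
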